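/- If there exists k ≥ 1 such that the matrix (𝓒𝓕)^k has spectral radius strictly less than 1, and the noises v_n and w_{l,n} are integrable random vectors with zero mean, then for every node l and every integrable initialization, E[ε_{l,n}] → 0 as n → ∞. -/

import Mathlib

/-!
Stack the node errors `ε_{l,n}` into one vector `ε_n` indexed by `ι × Fin d`
(`Function.uncurry`). Since the rows of `C` sum to one, `x_{n+1} - x̂_{l,n+1}` is the
`C`-combination of the local errors `x_{n+1} - φ_{i,n+1}`, and each of these equals
`F_i ε_{i,n} + (I - G_i H_i) v_n - G_i w_{i,n+1}` with `F_i = (I - G_i H_i) A`.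
Hence `ε_{n+1} = 𝓒𝓕 ε_n + ξ_n` with a noise `ξ_n` linear in `v_n, w_{·,n+1}`, so of mean zero,
and `E ε_{n+1} = (𝓒𝓕)^n E ε_1`. Finally, for `M = 𝓒𝓕`, `ρ(M)^k ≤ ρ(M^k) < 1`, and by
Gelfand's formula `‖M^n‖^{1/n} → ρ(M) < 1`, so `M^n → 0`.
-/

open Matrix Finset Kronecker MeasureTheory Filter
open scoped Topology

/-- Block-diagonal matrix with blocks `F l`, indexed over node–coordinate pairs. -/
def blockDiagNodes {ι : Type*} [DecidableEq ι] {d e : ℕ}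
    (F : ι → Matrix (Fin d) (Fin e) ℝ) : Matrix (ι × Fin d) (ι × Fin e) ℝ :=
  Matrix.of fun q r => if q.1 = r.1 then F q.1 q.2 r.2 else 0

/-- A real square matrix has spectral radius strictly less than one:
every complex eigenvalue has modulus `< 1`. -/
def SpecRadiusLtOne {n : Type*} [Fintype n] [DecidableEq n]
    (M : Matrix n n ℝ) : Prop :=
  ∀ z ∈ spectrum ℂ (M.map Complex.ofReal), ‖z‖ < 1

theorem tendsto_pow_nhds_zero_of_spectralRadius_lt_one {A : Type*} [NormedRing A]
    [NormedAlgebra ℂ A] [CompleteSpace A] {a : A} (ha : spectralRadius ℂ a < 1) :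
    Tendsto (a ^ ·) atTop (𝓝 0) := by
  obtain ⟨r, hρr, hr1⟩ := ENNReal.lt_iff_exists_nnreal_btwn.1 ha
  have hbound : ∀ᶠ n : ℕ in atTop, ‖a ^ n‖ ≤ (r : ℝ) ^ n := by
    have hgelfand := spectrum.pow_nnnorm_pow_one_div_tendsto_nhds_spectralRadius a
    filter_upwards [hgelfand.eventually_lt_const hρr, eventually_gt_atTop 0] with n hn hn0
    rw [one_div, ENNReal.rpow_inv_lt_iff (by positivity), ENNReal.rpow_natCast] at hn
    exact_mod_cast hn.le
  refine squeeze_zero_norm' hbound (tendsto_pow_atTop_nhds_zero_of_lt_one r.2 ?_)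
  exact_mod_cast hr1

theorem spectralRadius_lt_one_of_pow {A : Type*} [NormedRing A]
    [NormedAlgebra ℂ A] {a : A} {k : ℕ} (hk : k ≠ 0) (ha : spectralRadius ℂ (a ^ k) < 1) :
    spectralRadius ℂ a < 1 :=
  (pow_lt_one_iff hk).1 ((spectrum.spectralRadius_pow_le a k hk).trans_lt ha)

namespace Matrix

variable {m : Type*} [Fintype m] [DecidableEq m]

theorem spectralRadius_map_ofReal_lt_one {M : Matrix m m ℝ} (hM : SpecRadiusLtOne M) :
    spectralRadius ℂ (M.map Complex.ofReal) < 1 := by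
  let _ := Matrix.linftyOpNormedRing (n := m) (α := ℂ)
  let _ := Matrix.linftyOpNormedAlgebra (R := ℂ) (n := m) (α := ℂ)
  by_cases hne : (spectrum ℂ (M.map Complex.ofReal)).Nonempty
  · exact spectrum.spectralRadius_lt_of_forall_lt_of_nonempty hne fun z hz => by
      exact_mod_cast hM z hz
  · simp [spectralRadius, Set.not_nonempty_iff_eq_empty.1 hne]

theorem map_ofReal_pow (M : Matrix m m ℝ) (n : ℕ) :
    (M ^ n).map Complex.ofReal = M.map Complex.ofReal ^ n :=
  map_pow Complex.ofRealHom.mapMatrix M n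

theorem tendsto_pow_nhds_zero_of_specRadiusLtOne_pow {M : Matrix m m ℝ} {k : ℕ} (hk : k ≠ 0)
    (hM : SpecRadiusLtOne (M ^ k)) : Tendsto (M ^ ·) atTop (𝓝 0) := by
  -- Gelfand's formula needs a Banach-algebra norm; the ℓ∞ operator norm induces the entrywise
  -- topology, so the limit it gives is the one stated.
  let _ := Matrix.linftyOpNormedRing (n := m) (α := ℂ)
  let _ := Matrix.linftyOpNormedAlgebra (R := ℂ) (n := m) (α := ℂ)
  have hρ : spectralRadius ℂ (M.map Complex.ofReal) < 1 := by
    refine spectralRadius_lt_one_of_pow hk ?_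
    rw [← map_ofReal_pow]
    exact spectralRadius_map_ofReal_lt_one hM
  have hre := ((continuous_id.matrix_map Complex.continuous_re).tendsto 0).comp
    (tendsto_pow_nhds_zero_of_spectralRadius_lt_one hρ)
  convert hre using 2 with n
  · change M ^ n = (M.map Complex.ofReal ^ n).map Complex.re
    rw [← map_ofReal_pow, Matrix.map_map]
    ext
    simp
  · simp

end Matrix

namespace MeasureTheory

variable {Ω : Type*} [MeasurableSpace Ω] {μ : Measure Ω} {m n : Type*} [Fintype m] [Fintype n]

theorem Integrable.matrix_mulVec (B : Matrix m n ℝ) {f : Ω → n → ℝ} (hf : Integrable f μ) :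
    Integrable (fun ω => B *ᵥ f ω) μ :=
  (LinearMap.toContinuousLinearMap B.mulVecLin).integrable_comp hf

theorem integral_matrix_mulVec (B : Matrix m n ℝ) {f : Ω → n → ℝ} (hf : Integrable f μ) :
    ∫ ω, B *ᵥ f ω ∂μ = B *ᵥ ∫ ω, f ω ∂μ :=
  (LinearMap.toContinuousLinearMap B.mulVecLin).integral_comp_comm hf

theorem integrable_uncurry_iff {f : Ω → m → n → ℝ} :
    Integrable (fun ω => Function.uncurry (f ω)) μ ↔ ∀ i, Integrable (fun ω => f ω i) μ := by
  simp only [integrable_pi_iff (f := fun ω => Function.uncurry (f ω)), Prod.forall,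
    Function.uncurry_apply_pair]
  exact forall_congr' fun i => (integrable_pi_iff (f := fun ω => f ω i)).symm

theorem integral_uncurry {f : Ω → m → n → ℝ} (hf : ∀ i, Integrable (fun ω => f ω i) μ) :
    ∫ ω, Function.uncurry (f ω) ∂μ = Function.uncurry fun i => ∫ ω, f ω i ∂μ := by
  ext ⟨i, a⟩
  rw [eval_integral ((integrable_uncurry_iff.2 hf).eval) (i, a),
    Function.uncurry_apply_pair, eval_integral ((hf i).eval) a]
  rfl

theorem integral_eq_zero_of_forall_eval {f : Ω → m → ℝ} (hf : ∀ a, Integrable (fun ω => f ω a) μ)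
    (h : ∀ a, ∫ ω, f ω a ∂μ = 0) : ∫ ω, f ω ∂μ = 0 :=
  funext fun a => (eval_integral hf a).trans (h a)

variable {M : Matrix m m ℝ} {X ξ : ℕ → Ω → m → ℝ}

theorem integrable_of_mulVec_recursion (hX : ∀ n ω, X (n + 1) ω = M *ᵥ X n ω + ξ n ω)
    (hX0 : Integrable (X 0) μ) (hξ : ∀ n, Integrable (ξ n) μ) (n : ℕ) : Integrable (X n) μ := by
  induction n with
  | zero => exact hX0
  | succ n ih =>
    rw [show X (n + 1) = _ from funext (hX n)]
    exact (ih.matrix_mulVec M).add (hξ n)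

variable [DecidableEq m]

theorem integral_eq_pow_mulVec_of_mulVec_recursion
    (hX : ∀ n ω, X (n + 1) ω = M *ᵥ X n ω + ξ n ω)
    (hX0 : Integrable (X 0) μ) (hξ : ∀ n, Integrable (ξ n) μ) (hξ0 : ∀ n, ∫ ω, ξ n ω ∂μ = 0)
    (n : ℕ) : ∫ ω, X n ω ∂μ = (M ^ n) *ᵥ ∫ ω, X 0 ω ∂μ := by
  induction n with
  | zero => simp
  | succ n ih =>
    have hXn := integrable_of_mulVec_recursion hX hX0 hξ n
    calc ∫ ω, X (n + 1) ω ∂μ = ∫ ω, M *ᵥ X n ω + ξ n ω ∂μ := by simp only [hX]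
      _ = M *ᵥ ∫ ω, X n ω ∂μ := by
        rw [integral_add (hXn.matrix_mulVec M) (hξ n), integral_matrix_mulVec M hXn, hξ0, add_zero]
      _ = M ^ (n + 1) *ᵥ ∫ ω, X 0 ω ∂μ := by rw [ih, mulVec_mulVec, pow_succ']

theorem tendsto_integral_of_mulVec_recursion (hX : ∀ n ω, X (n + 1) ω = M *ᵥ X n ω + ξ n ω)
    (hX0 : Integrable (X 0) μ) (hξ : ∀ n, Integrable (ξ n) μ) (hξ0 : ∀ n, ∫ ω, ξ n ω ∂μ = 0)
    (hM : Tendsto (M ^ ·) atTop (𝓝 0)) : Tendsto (fun n => ∫ ω, X n ω ∂μ) atTop (𝓝 0) := by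
  rw [funext (integral_eq_pow_mulVec_of_mulVec_recursion hX hX0 hξ hξ0)]
  exact ((continuous_id.matrix_mulVec continuous_const).tendsto' 0 0 (zero_mulVec _)).comp hM

end MeasureTheory

theorem Matrix.kronecker_one_mulVec_uncurry {R ι κ ν : Type*} [CommSemiring R] [Fintype ι]
    [Fintype κ] [DecidableEq κ] (C : Matrix ν ι R) (z : ι → κ → R) :
    (C ⊗ₖ (1 : Matrix κ κ R)) *ᵥ Function.uncurry z =
      Function.uncurry fun l => ∑ i, C l i • z i := by
  ext ⟨l, a⟩
  simp [mulVec, dotProduct, Fintype.sum_prod_type, one_apply, Finset.sum_apply]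

theorem blockDiagNodes_mulVec_uncurry {ι : Type*} [Fintype ι] [DecidableEq ι] {d e : ℕ}
    (F : ι → Matrix (Fin d) (Fin e) ℝ) (z : ι → Fin e → ℝ) :
    blockDiagNodes F *ᵥ Function.uncurry z = Function.uncurry fun i => F i *ᵥ z i := by
  ext ⟨i, a⟩
  simp only [blockDiagNodes, mulVec, dotProduct, Fintype.sum_prod_type, of_apply,
    Function.uncurry_apply_pair, ite_mul, zero_mul]
  rw [Fintype.sum_eq_single i fun j hj => by simp [Ne.symm hj]]
  simp

theorem sub_sum_smul_of_sum_eq_one {R E ι : Type*} [Ring R] [AddCommGroup E] [Module R E]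
    {s : Finset ι} {c : ι → R} (hc : ∑ i ∈ s, c i = 1) (x : E) (φ : ι → E) :
    x - ∑ i ∈ s, c i • φ i = ∑ i ∈ s, c i • (x - φ i) := by
  simp only [smul_sub, sum_sub_distrib, ← sum_smul, hc, one_smul]

theorem sub_localUpdate_eq {R n q : Type*} [CommRing R] [Fintype n] [Fintype q] [DecidableEq n]
    (A : Matrix n n R) (H : Matrix q n R) (G : Matrix n q R) (x xh v : n → R) (w : q → R) :
    A *ᵥ x + v - (((1 - G * H) * A) *ᵥ xh + G *ᵥ (H *ᵥ (A *ᵥ x + v) + w)) =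
      ((1 - G * H) * A) *ᵥ (x - xh) + ((1 - G * H) *ᵥ v - G *ᵥ w) := by
  simp only [sub_mulVec, one_mulVec, mulVec_add, mulVec_sub, ← mulVec_mulVec]
  abel

section DistributedFilter

variable {ι : Type*} {d p : ℕ} (A : Matrix (Fin d) (Fin d) ℝ) (H : ι → Matrix (Fin p) (Fin d) ℝ)
  (G : ι → Matrix (Fin d) (Fin p) ℝ)
  {Ω : Type*} [MeasurableSpace Ω] {μ : Measure Ω} {v : Ω → Fin d → ℝ} {w : Ω → ι → Fin p → ℝ}

theorem integrable_localNoise (hv : ∀ a, Integrable (fun ω => v ω a) μ)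
    (hw : ∀ i b, Integrable (fun ω => w ω i b) μ) (i : ι) :
    Integrable (fun ω => (1 - G i * H i) *ᵥ v ω - G i *ᵥ w ω i) μ :=
  ((Integrable.of_eval hv).matrix_mulVec _).sub ((Integrable.of_eval (hw i)).matrix_mulVec _)

variable [Fintype ι] (C : Matrix ι ι ℝ)

def filterNoise (v : Fin d → ℝ) (w : ι → Fin p → ℝ) : ι × Fin d → ℝ :=
  (C ⊗ₖ (1 : Matrix (Fin d) (Fin d) ℝ)) *ᵥ
    Function.uncurry fun i => (1 - G i * H i) *ᵥ v - G i *ᵥ w i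

theorem uncurry_sub_filterStep_eq [DecidableEq ι] (hrow : ∀ l, ∑ i, C l i = 1) (x v : Fin d → ℝ)
    (w : ι → Fin p → ℝ) (xh : ι → Fin d → ℝ) :
    (Function.uncurry fun l => A *ᵥ x + v -
        ∑ i, C l i • (((1 - G i * H i) * A) *ᵥ xh i + G i *ᵥ (H i *ᵥ (A *ᵥ x + v) + w i))) =
      ((C ⊗ₖ (1 : Matrix (Fin d) (Fin d) ℝ)) * blockDiagNodes fun i => (1 - G i * H i) * A) *ᵥ
        Function.uncurry (fun l => x - xh l) + filterNoise H G C v w := by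
  simp only [sub_sum_smul_of_sum_eq_one (hrow _), sub_localUpdate_eq]
  rw [← kronecker_one_mulVec_uncurry, filterNoise, ← mulVec_mulVec, ← mulVec_add,
    blockDiagNodes_mulVec_uncurry]
  rfl

theorem integrable_filterNoise (hv : ∀ a, Integrable (fun ω => v ω a) μ)
    (hw : ∀ i b, Integrable (fun ω => w ω i b) μ) :
    Integrable (fun ω => filterNoise H G C (v ω) (w ω)) μ :=
  (integrable_uncurry_iff.2 (integrable_localNoise H G hv hw)).matrix_mulVec _

theorem integral_filterNoise_eq_zero (hv : ∀ a, Integrable (fun ω => v ω a) μ)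
    (hw : ∀ i b, Integrable (fun ω => w ω i b) μ) (hv0 : ∀ a, ∫ ω, v ω a ∂μ = 0)
    (hw0 : ∀ i b, ∫ ω, w ω i b ∂μ = 0) :
    ∫ ω, filterNoise H G C (v ω) (w ω) ∂μ = 0 := by
  have hlocal : ∀ i, ∫ ω, (1 - G i * H i) *ᵥ v ω - G i *ᵥ w ω i ∂μ = 0 := fun i => by
    have hv' := Integrable.of_eval hv
    have hw' := Integrable.of_eval (hw i)
    rw [integral_sub (hv'.matrix_mulVec _) (hw'.matrix_mulVec _), integral_matrix_mulVec _ hv',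
      integral_matrix_mulVec _ hw', integral_eq_zero_of_forall_eval hv hv0,
      integral_eq_zero_of_forall_eval (hw i) (hw0 i), mulVec_zero, mulVec_zero, sub_zero]
  have hnoise := integrable_localNoise H G hv hw
  simp only [filterNoise]
  rw [integral_matrix_mulVec _ (integrable_uncurry_iff.2 hnoise), integral_uncurry hnoise]
  simp only [hlocal]
  exact mulVec_zero _

end DistributedFilter

theorem distributed_filter_unbiased_of_power_stable_general
    {d p : ℕ} {ι : Type*} [Fintype ι] [DecidableEq ι]
    {Ω : Type*} [MeasurableSpace Ω] (μ : Measure Ω)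
    (Nbhd : ι → Finset ι)
    (A : Matrix (Fin d) (Fin d) ℝ)
    (H : ι → Matrix (Fin p) (Fin d) ℝ)
    (G : ι → Matrix (Fin d) (Fin p) ℝ)
    (c : ι → ι → ℝ)
    (hcsupp : ∀ l i, i ∉ Nbhd l → c l i = 0)
    (hcrow : ∀ l, ∑ i ∈ Nbhd l, c l i = 1)
    (C : Matrix ι ι ℝ) (hC : ∀ l i, C l i = c l i)
    -- some power of `𝓒𝓕` has spectral radius `< 1`
    (hpow : ∃ k : ℕ, 1 ≤ k ∧ SpecRadiusLtOne
      (((C ⊗ₖ (1 : Matrix (Fin d) (Fin d) ℝ)) *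
        blockDiagNodes fun l => (1 - G l * H l) * A) ^ k))
    -- the distributed filter
    (x v : ℕ → Ω → Fin d → ℝ)
    (w y : ι → ℕ → Ω → Fin p → ℝ)
    (φ xhat : ι → ℕ → Ω → Fin d → ℝ)
    (hx : ∀ n ω, x (n + 1) ω = A.mulVec (x n ω) + v n ω)
    (hy : ∀ l n ω, y l n ω = (H l).mulVec (x n ω) + w l n ω)
    (hφ : ∀ l n ω, φ l (n + 1) ω =
      ((1 - G l * H l) * A).mulVec (xhat l n ω) + (G l).mulVec (y l (n + 1) ω))
    (hxhat : ∀ l n ω, xhat l (n + 1) ω = ∑ i ∈ Nbhd l, c l i • φ i (n + 1) ω)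
    -- the noises are integrable with zero mean
    (hvint : ∀ n a, Integrable (fun ω => v n ω a) μ)
    (hvmean : ∀ n a, ∫ ω, v n ω a ∂μ = 0)
    (hwint : ∀ l n b, Integrable (fun ω => w l n ω b) μ)
    (hwmean : ∀ l n b, ∫ ω, w l n ω b ∂μ = 0)
    -- integrable initialization of the state and of the estimates
    (hxint : ∀ a, Integrable (fun ω => x 1 ω a) μ)
    (hxhatint : ∀ l a, Integrable (fun ω => xhat l 1 ω a) μ) :
    ∀ l a, Tendsto (fun n => ∫ ω, (x n ω a - xhat l n ω a) ∂μ) atTop (nhds 0) := by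
  obtain ⟨k, hk, hstable⟩ := hpow
  simp_rw [← hC] at hcsupp hcrow hxhat
  have hrow : ∀ l, ∑ i, C l i = 1 := fun l => by
    rw [← sum_subset (subset_univ _) fun i _ => hcsupp l i]
    exact hcrow l
  have hcomb : ∀ l n ω, xhat l (n + 1) ω = ∑ i, C l i • φ i (n + 1) ω := fun l n ω => by
    rw [hxhat, sum_subset (subset_univ _) fun i _ hi => by rw [hcsupp l i hi, zero_smul]]
  set X : ℕ → Ω → ι × Fin d → ℝ :=
    fun n ω => Function.uncurry fun l => x (n + 1) ω - xhat l (n + 1) ω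
  set M := (C ⊗ₖ (1 : Matrix (Fin d) (Fin d) ℝ)) * blockDiagNodes fun l => (1 - G l * H l) * A
  have hrec : ∀ n ω, X (n + 1) ω =
      M *ᵥ X n ω + filterNoise H G C (v (n + 1) ω) fun i => w i (n + 2) ω := by
    intro n ω
    rw [← uncurry_sub_filterStep_eq A H G C hrow]
    simp only [X, hcomb _ (n + 1), hφ, hy, hx (n + 1)]
  have hX0 : Integrable (X 0) μ := integrable_uncurry_iff.2 fun l =>
    (Integrable.of_eval hxint).sub (Integrable.of_eval (hxhatint l))
  have hnoise n := integrable_filterNoise H G C (hvint (n + 1)) fun i => hwint i (n + 2)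
  have hnoise0 n := integral_filterNoise_eq_zero H G C (hvint (n + 1)) (fun i => hwint i (n + 2))
    (hvmean (n + 1)) fun i => hwmean i (n + 2)
  have hmean := tendsto_integral_of_mulVec_recursion hrec hX0 hnoise hnoise0
    (tendsto_pow_nhds_zero_of_specRadiusLtOne_pow (Nat.one_le_iff_ne_zero.1 hk) hstable)
  intro l a
  rw [← tendsto_add_atTop_iff_nat 1]
  refine (((continuous_apply (l, a)).tendsto 0).comp hmean).congr fun n => ?_
  exact eval_integral (integrable_of_mulVec_recursion hrec hX0 hnoise n).eval (l, a)

/-- If there exists `k ≥ 1` such that `(𝓒𝓕)^k` has spectral radius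
strictly less than `1`, and the noises `v_n` and `w_{l,n}` are integrable random vectors
with zero mean, then for every node `l` and every integrable initialization,
`E[ε_{l,n}] → 0` as `n → ∞`. -/
theorem distributed_filter_unbiased_of_power_stable
    {d p : ℕ} {ι : Type*} [Fintype ι] [DecidableEq ι]
    {Ω : Type*} [MeasurableSpace Ω] (μ : Measure Ω) [IsProbabilityMeasure μ]
    (Nbhd : ι → Finset ι) (hself : ∀ l, l ∈ Nbhd l)
    (A : Matrix (Fin d) (Fin d) ℝ)
    (H : ι → Matrix (Fin p) (Fin d) ℝ)
    (G : ι → Matrix (Fin d) (Fin p) ℝ)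
    (c : ι → ι → ℝ)
    (hc0 : ∀ l i, 0 ≤ c l i)
    (hcsupp : ∀ l i, i ∉ Nbhd l → c l i = 0)
    (hcrow : ∀ l, ∑ i ∈ Nbhd l, c l i = 1)
    (C : Matrix ι ι ℝ) (hC : ∀ l i, C l i = c l i)
    -- some power of `𝓒𝓕` has spectral radius `< 1`
    (hpow : ∃ k : ℕ, 1 ≤ k ∧ SpecRadiusLtOne
      (((C ⊗ₖ (1 : Matrix (Fin d) (Fin d) ℝ)) *
        blockDiagNodes fun l => (1 - G l * H l) * A) ^ k))
    -- the distributed filter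
    (x v : ℕ → Ω → Fin d → ℝ)
    (w y : ι → ℕ → Ω → Fin p → ℝ)
    (φ xhat : ι → ℕ → Ω → Fin d → ℝ)
    (hx : ∀ n ω, x (n + 1) ω = A.mulVec (x n ω) + v n ω)
    (hy : ∀ l n ω, y l n ω = (H l).mulVec (x n ω) + w l n ω)
    (hφ : ∀ l n ω, φ l (n + 1) ω =
      ((1 - G l * H l) * A).mulVec (xhat l n ω) + (G l).mulVec (y l (n + 1) ω))
    (hxhat : ∀ l n ω, xhat l (n + 1) ω = ∑ i ∈ Nbhd l, c l i • φ i (n + 1) ω)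
    -- the noises are integrable with zero mean
    (hvint : ∀ n a, Integrable (fun ω => v n ω a) μ)
    (hvmean : ∀ n a, ∫ ω, v n ω a ∂μ = 0)
    (hwint : ∀ l n b, Integrable (fun ω => w l n ω b) μ)
    (hwmean : ∀ l n b, ∫ ω, w l n ω b ∂μ = 0)
    -- integrable initialization of the state and of the estimates
    (hxint : ∀ a, Integrable (fun ω => x 1 ω a) μ)
    (hxhatint : ∀ l a, Integrable (fun ω => xhat l 1 ω a) μ) :
    ∀ l a, Tendsto (fun n => ∫ ω, (x n ω a - xhat l n ω a) ∂μ) atTop (nhds 0) :=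
  distributed_filter_unbiased_of_power_stable_general μ Nbhd A H G c hcsupp hcrow C hC hpow x v w y
    φ xhat hx hy hφ hxhat hvint hvmean hwint hwmean hxint hxhatint
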